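/- Let G be a finite group and Γ ⊆ G a union of conjugacy classes generating G. Then H_{2,Γ}(G) := ker(G_Γ → G × G_Γ^{ab}) is isomorphic to ker(∂_Γ) ∩ [Adj Γ, Adj Γ], where ∂_Γ : Adj Γ → G is induced by e_g ↦ g. -/

import Mathlib

/-!
Both groups are quotients by the same conjugation relations, so `e_a ↦ â` defines
`φ : Adj Γ → G_Γ`. Conversely, since `Γ` generates `G`, `∂` is onto and we may choose preimages
`s g` with `s a = e_a` for `a ∈ Γ`; then `ĝ ↦ s g` defines `ψ : G_Γ → Adj Γ`. The conjugation
relations hold because `x⁻¹ e_a x = e_{∂(x)⁻¹ a ∂(x)}` in `Adj Γ`, and `[F, R]` dies because this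
makes `ker ∂` central. Now `ψ ∘ φ = id`, while `φ ∘ ψ` agrees with the identity modulo the central
subgroup `ker α = R / R_Γ`, so it fixes every commutator. Hence `φ` maps `ker ∂ ∩ [Adj Γ, Adj Γ]`
isomorphically onto `ker α ∩ [G_Γ, G_Γ] = H_{2,Γ}(G)`.
-/

variable (G : Type*) [Group G]

/-- The canonical surjection from the free group `F` on the set `G` to `G`. -/
def tautProj : FreeGroup G →* G := FreeGroup.lift id

/-- `R = ker (F → G)`. -/
def Rrel : Subgroup (FreeGroup G) := (tautProj G).ker

/-- The commutator subgroup `[F, R]`. -/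
def FRcomm : Subgroup (FreeGroup G) := ⁅(⊤ : Subgroup (FreeGroup G)), Rrel G⁆

/-- The tautological lifts `â b̂ ĉ⁻¹ b̂⁻¹` of the conjugation relations, `a ∈ Γ`,
`c = b⁻¹ a b`. -/
def conjRels (Γ : Set G) : Set (FreeGroup G) :=
  {x | ∃ a ∈ Γ, ∃ b : G, x = FreeGroup.of a * FreeGroup.of b *
    (FreeGroup.of (b⁻¹ * a * b))⁻¹ * (FreeGroup.of b)⁻¹}

/-- `R_Γ`: the normal subgroup generated by `[F,R]` and the lifted conjugation relations. -/
def RGamma (Γ : Set G) : Subgroup (FreeGroup G) :=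
  Subgroup.normalClosure ((FRcomm G : Set (FreeGroup G)) ∪ conjRels G Γ)

instance (Γ : Set G) : (RGamma G Γ).Normal := Subgroup.normalClosure_normal

/-- The relations `e_a e_b = e_b e_{b⁻¹ a b}` for the adjoint group `Adj Γ` of the
conjugation quandle `Γ`. -/
def adjRels (Γ : Set G) (hΓ : ∀ a ∈ Γ, ∀ b : G, b⁻¹ * a * b ∈ Γ) : Set (FreeGroup Γ) :=
  {x | ∃ a b : Γ, x = FreeGroup.of a * FreeGroup.of b *
    (FreeGroup.of (⟨(↑b)⁻¹ * ↑a * ↑b, hΓ a a.2 b⟩ : Γ))⁻¹ * (FreeGroup.of b)⁻¹}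

open Subgroup commutatorElement

section

variable {A : Type*} [Group A]

theorem MonoidHom.map_commutator_le {B : Type*} [Group B] (f : A →* B) :
    (commutator A).map f ≤ commutator B := by
  rw [map_commutator_eq]
  exact commutator_mono le_top le_top

theorem commutatorElement_mul_of_mem_center {z w : A} (hz : z ∈ center A) (hw : w ∈ center A)
    (a b : A) : ⁅z * a, w * b⁆ = ⁅a, b⁆ := by
  rw [mem_center_iff] at hz hw
  simp only [commutatorElement_def, mul_inv_rev]
  calc z * a * (w * b) * (a⁻¹ * z⁻¹) * (b⁻¹ * w⁻¹)
      = z * (a * (w * b) * a⁻¹) * z⁻¹ * (b⁻¹ * w⁻¹) := by group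
    _ = a * (w * (b * a⁻¹ * b⁻¹) * w⁻¹) := by rw [← hz, mul_inv_cancel_right]; group
    _ = a * b * a⁻¹ * b⁻¹ := by rw [← hw, mul_inv_cancel_right]; group

theorem MonoidHom.eq_self_of_mem_commutator (f : A →* A) (hf : ∀ x, f x * x⁻¹ ∈ center A)
    {x : A} (hx : x ∈ commutator A) : f x = x := by
  suffices commutator A ≤ f.eqLocus (MonoidHom.id A) from this hx
  rw [commutator_def, commutator_le]
  intro a _ b _
  calc f ⁅a, b⁆ = ⁅f a * a⁻¹ * a, f b * b⁻¹ * b⁆ := by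
        rw [map_commutatorElement, inv_mul_cancel_right, inv_mul_cancel_right]
    _ = ⁅a, b⁆ := commutatorElement_mul_of_mem_center (hf a) (hf b) a b

theorem map_ker_inf_commutator_eq {B C : Type*} [Group B] [Group C] {α : A →* C} {δ : B →* C}
    {φ : B →* A} {ψ : A →* B} (hαφ : ∀ y, α (φ y) = δ y) (hδψ : ∀ x, δ (ψ x) = α x)
    (hcenter : α.ker ≤ center A) :
    (δ.ker ⊓ commutator B).map φ = α.ker ⊓ commutator A := by
  apply le_antisymm
  · rintro _ ⟨y, ⟨hyδ, hy⟩, rfl⟩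
    exact ⟨(hαφ y).trans hyδ, MonoidHom.map_commutator_le φ ⟨y, hy, rfl⟩⟩
  · rintro x ⟨hxα, hx⟩
    refine ⟨ψ x, ⟨(hδψ x).trans hxα, MonoidHom.map_commutator_le ψ ⟨x, hx, rfl⟩⟩, ?_⟩
    refine (φ.comp ψ).eq_self_of_mem_commutator (fun y => hcenter ?_) hx
    rw [MonoidHom.mem_ker, map_mul, map_inv, MonoidHom.comp_apply, hαφ, hδψ, mul_inv_cancel]

end

section

variable {G} {Γ : Set G} (hΓ : ∀ a ∈ Γ, ∀ b : G, b⁻¹ * a * b ∈ Γ)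

abbrev AdjGroup := PresentedGroup (adjRels G Γ hΓ)

def conjBy (b : G) (a : Γ) : Γ := ⟨b⁻¹ * a * b, hΓ a a.2 b⟩

@[simp] theorem conjBy_one (a : Γ) : conjBy hΓ 1 a = a := Subtype.ext (by simp [conjBy])

@[simp] theorem conjBy_mul (x y : G) (a : Γ) :
    conjBy hΓ (x * y) a = conjBy hΓ y (conjBy hΓ x a) := Subtype.ext (by simp [conjBy]; group)

@[simp] theorem conjBy_conjBy_inv (x : G) (a : Γ) : conjBy hΓ x (conjBy hΓ x⁻¹ a) = a :=
  Subtype.ext (by simp [conjBy]; group)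

namespace AdjGroup

open PresentedGroup

theorem inv_of_mul_of_mul_of (a b : Γ) :
    (of b)⁻¹ * of a * of b = (of (conjBy hΓ b a) : AdjGroup hΓ) := by
  have h : mk (adjRels G Γ hΓ) (FreeGroup.of a * FreeGroup.of b *
      (FreeGroup.of (conjBy hΓ b a))⁻¹ * (FreeGroup.of b)⁻¹) = 1 := one_of_mem ⟨a, b, rfl⟩
  rw [map_mul, map_mul, map_inv, map_inv, mul_inv_eq_one, mul_inv_eq_iff_eq_mul] at h
  rw [mul_assoc, inv_mul_eq_iff_eq_mul]
  exact h

variable {hΓ} (δ : AdjGroup hΓ →* G)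

theorem apply_lift_eq_tautProj {s : G → AdjGroup hΓ} (hs : ∀ g, δ (s g) = g)
    (w : FreeGroup G) : δ (FreeGroup.lift s w) = tautProj G w := by
  have h : δ.comp (FreeGroup.lift s) = tautProj G :=
    FreeGroup.ext_hom _ _ fun g => by simp [hs, tautProj]
  exact DFunLike.congr_fun h w

variable (hδ : ∀ a : Γ, δ (of a) = a)
include hδ

theorem inv_mul_of_mul (x : AdjGroup hΓ) (a : Γ) : x⁻¹ * of a * x = of (conjBy hΓ (δ x) a) := by
  have hx : x ∈ closure (Set.range of) := by rw [closure_range_of]; trivial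
  induction hx using closure_induction generalizing a with
  | mem _ hy =>
    obtain ⟨b, rfl⟩ := hy
    rw [hδ, inv_of_mul_of_mul_of]
  | one => simp
  | mul y z _ _ hy hz => rw [map_mul, conjBy_mul, ← hz, ← hy]; group
  | inv y _ hy =>
    calc y⁻¹⁻¹ * of a * y⁻¹ = y * (y⁻¹ * of (conjBy hΓ (δ y)⁻¹ a) * y) * y⁻¹ := by
          rw [hy, conjBy_conjBy_inv, inv_inv]
      _ = of (conjBy hΓ (δ y⁻¹) a) := by rw [map_inv]; group

theorem ker_le_center : δ.ker ≤ center (AdjGroup hΓ) := by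
  intro x hx
  have hgen : ∀ a : Γ, of a ∈ centralizer {x} := fun a => by
    rw [mem_centralizer_singleton_iff, ← inv_mul_eq_iff_eq_mul, ← mul_assoc,
      inv_mul_of_mul δ hδ, hx, conjBy_one]
  have htop : ⊤ ≤ centralizer {x} := by
    rw [← closure_range_of, closure_le]
    rintro _ ⟨a, rfl⟩
    exact hgen a
  rw [mem_center_iff]
  exact fun g => mem_centralizer_singleton_iff.mp (htop trivial)

theorem RGamma_le_ker_lift {s : G → AdjGroup hΓ} (hs : ∀ g, δ (s g) = g)
    (hsΓ : ∀ a : Γ, s a = of a) : RGamma G Γ ≤ (FreeGroup.lift s).ker := by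
  refine normalClosure_le_normal ?_
  rintro _ (hw | ⟨a, ha, b, rfl⟩)
  · refine (commutator_le.2 fun u _ v hv => ?_) hw
    rw [MonoidHom.mem_ker, map_commutatorElement, commutatorElement_eq_one_iff_commute]
    have hv' : FreeGroup.lift s v ∈ δ.ker := by
      rw [MonoidHom.mem_ker, apply_lift_eq_tautProj δ hs]; exact hv
    exact (mem_center_iff.1 (ker_le_center δ hδ hv') _)
  · have hconj : (s b)⁻¹ * of ⟨a, ha⟩ * s b = of (conjBy hΓ b ⟨a, ha⟩) := by
      rw [inv_mul_of_mul δ hδ, hs]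
    have hsc : s (b⁻¹ * a * b) = of (conjBy hΓ b ⟨a, ha⟩) := hsΓ (conjBy hΓ b ⟨a, ha⟩)
    rw [SetLike.mem_coe, MonoidHom.mem_ker]
    simp only [map_mul, map_inv, FreeGroup.lift_apply_of]
    rw [hsΓ ⟨a, ha⟩, hsc, ← hconj]
    group

theorem exists_section (hgen : closure Γ = ⊤) :
    ∃ s : G → AdjGroup hΓ, (∀ g, δ (s g) = g) ∧ ∀ a : Γ, s a = of a := by
  have hsurj : Function.Surjective δ := by
    rw [← MonoidHom.range_eq_top, eq_top_iff, ← hgen, closure_le]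
    exact fun g hg => ⟨of ⟨g, hg⟩, hδ _⟩
  classical
  refine ⟨fun g => if hg : g ∈ Γ then of ⟨g, hg⟩ else Function.surjInv hsurj g, fun g => ?_,
    fun a => dif_pos a.2⟩
  dsimp only
  split_ifs with hg
  · exact hδ _
  · exact Function.surjInv_eq hsurj g

end AdjGroup

end

section

variable {G} {Γ : Set G}

abbrev GGamma (Γ : Set G) := FreeGroup G ⧸ RGamma G Γ

namespace GGamma

theorem mk_mem_center {w : FreeGroup G} (hw : w ∈ Rrel G) :
    (w : GGamma Γ) ∈ center (GGamma Γ) := by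
  rw [mem_center_iff]
  intro g
  induction g using QuotientGroup.induction_on with
  | H v =>
    have hvw : ⁅v, w⁆ ∈ RGamma G Γ :=
      subset_normalClosure (Or.inl (commutator_mem_commutator (mem_top v) hw))
    have h : QuotientGroup.mk' (RGamma G Γ) ⁅v, w⁆ = 1 := (QuotientGroup.eq_one_iff _).2 hvw
    rw [map_commutatorElement, commutatorElement_eq_one_iff_commute] at h
    exact h.eq

theorem lift_adjRels_eq_one (hΓ : ∀ a ∈ Γ, ∀ b : G, b⁻¹ * a * b ∈ Γ) :
    ∀ r ∈ adjRels G Γ hΓ,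
      FreeGroup.lift (fun a : Γ => (FreeGroup.of (a : G) : GGamma Γ)) r = 1 := by
  rintro _ ⟨a, b, rfl⟩
  have h : ((FreeGroup.of (a : G) * FreeGroup.of (b : G) *
      (FreeGroup.of ((b : G)⁻¹ * a * b))⁻¹ * (FreeGroup.of (b : G))⁻¹ : FreeGroup G) :
      GGamma Γ) = 1 :=
    (QuotientGroup.eq_one_iff _).2 (subset_normalClosure (Or.inr ⟨a, a.2, b, rfl⟩))
  simpa only [map_mul, map_inv, FreeGroup.lift_apply_of, QuotientGroup.mk_mul,
    QuotientGroup.mk_inv] using h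

def ofAdjGroup (hΓ : ∀ a ∈ Γ, ∀ b : G, b⁻¹ * a * b ∈ Γ) : AdjGroup hΓ →* GGamma Γ :=
  PresentedGroup.toGroup (lift_adjRels_eq_one hΓ)

@[simp] theorem ofAdjGroup_of (hΓ : ∀ a ∈ Γ, ∀ b : G, b⁻¹ * a * b ∈ Γ) (a : Γ) :
    ofAdjGroup hΓ (PresentedGroup.of a) = (FreeGroup.of (a : G) : GGamma Γ) :=
  PresentedGroup.toGroup.of _

variable (α : GGamma Γ →* G) (hα : ∀ g : G, α (FreeGroup.of g : GGamma Γ) = g)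
include hα

theorem apply_mk (w : FreeGroup G) : α (w : GGamma Γ) = tautProj G w := by
  have h : α.comp (QuotientGroup.mk' _) = tautProj G :=
    FreeGroup.ext_hom _ _ fun g => by simp [hα, tautProj]
  exact DFunLike.congr_fun h w

theorem ker_le_center : α.ker ≤ center (GGamma Γ) := by
  intro x hx
  induction x using QuotientGroup.induction_on with
  | H w => exact mk_mem_center (by rwa [MonoidHom.mem_ker, apply_mk α hα] at hx)

end GGamma

end

theorem H2Gamma_eq_adj_invariant (Γ : Set G)
    (hΓ : ∀ a ∈ Γ, ∀ b : G, b⁻¹ * a * b ∈ Γ)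
    (hgen : Subgroup.closure Γ = ⊤)
    (α : (FreeGroup G ⧸ RGamma G Γ) →* G)
    (hα : ∀ g : G, α (QuotientGroup.mk (FreeGroup.of g)) = g)
    (δ : PresentedGroup (adjRels G Γ hΓ) →* G)
    (hδ : ∀ a : Γ, δ (PresentedGroup.of a) = (a : G)) :
    Nonempty
      ((α.prod (Abelianization.of : (FreeGroup G ⧸ RGamma G Γ) →*
          Abelianization (FreeGroup G ⧸ RGamma G Γ))).ker ≃*
        (δ.ker ⊓ commutator (PresentedGroup (adjRels G Γ hΓ)) :
          Subgroup (PresentedGroup (adjRels G Γ hΓ)))) := by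
  obtain ⟨s, hs, hsΓ⟩ := AdjGroup.exists_section δ hδ hgen
  let φ := GGamma.ofAdjGroup hΓ
  let ψ := QuotientGroup.lift _ (FreeGroup.lift s) (AdjGroup.RGamma_le_ker_lift δ hδ hs hsΓ)
  have hαφ : ∀ y, α (φ y) = δ y :=
    DFunLike.congr_fun (PresentedGroup.ext (φ := α.comp φ) fun a => by simp [φ, hα, hδ])
  have hδψ : ∀ x, δ (ψ x) = α x := fun x => QuotientGroup.induction_on x fun w => by
    simp [ψ, AdjGroup.apply_lift_eq_tautProj δ hs, GGamma.apply_mk α hα]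
  have hψφ : Function.LeftInverse ψ φ :=
    DFunLike.congr_fun (PresentedGroup.ext (φ := ψ.comp φ) (ψ := MonoidHom.id _)
      fun a => by simp [φ, ψ, hsΓ])
  rw [MonoidHom.ker_prod, Abelianization.ker_of,
    ← map_ker_inf_commutator_eq hαφ hδψ (GGamma.ker_le_center α hα)]
  exact ⟨(Subgroup.equivMapOfInjective _ φ hψφ.injective).symm⟩
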